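/- Let K ⊆ ℝ have 0 as an accumulation point, and let (μ_t)_{t∈K} and (ν_t)_{t∈K} be families of linear functionals on ℂ[X] with μ_t(1) = ν_t(1) = 1, such that there exist linear functionals μ^{(0)},...,μ^{(k)} and ν^{(0)},...,ν^{(k)} on ℂ[X] with μ_t(P) = Σ_{i=0}^k (t^i/i!) μ^{(i)}(P) + o(t^k) and ν_t(P) = Σ_{i=0}^k (t^i/i!) ν^{(i)}(P) + o(t^k) as t → 0 along K, for every P ∈ ℂ[X]. Then there exist linear functionals η^{(0)}, ..., η^{(k)} on ℂ[X] such that (μ_t ⊞ ν_t)(P) = Σ_{i=0}^k (t^i/i!) η^{(i)}(P) + o(t^k) for every P ∈ ℂ[X] as t → 0 along K; moreover, for every n ≥ 1 and 0 ≤ i ≤ k, the infinitesimal non-crossing cumulants satisfy κ_n^{(i)}[η](X,...,X) = κ_n^{(i)}[μ](X,...,X) + κ_n^{(i)}[ν](X,...,X), where κ_n^{(i)}[μ] denotes the infinitesimal non-crossing cumulant functionals of (ℂ[X], (μ^{(i)})_{0≤i≤k}), and similarly for ν and η. (Thus the derivatives at 0 of μ_t ⊞ ν_t exist up to order k and are given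 by the infinitesimal free additive convolution of order k of the derivatives of μ_t and ν_t.) -/

import Mathlib

/-!
Free cumulants are obtained from moments by the recursion over `NC(n)`, which is polynomial
with integer coefficients; it therefore commutes with ring homomorphisms and preserves
subrings. Pairs `(g, F)` such that the power series `F` gives an order-`k` expansion of `g` at
`0` form a subalgebra of `(ℝ → ℂ) × ℂ⟦X⟧`, so the free cumulants of `μ_t` and `ν_t`, and then
the moments of `μ_t ⊞ ν_t`, are expanded by the same recursion applied to the exponential
generating series `∑ᵢ μ⁽ⁱ⁾(Xⁿ) tⁱ / i!`; the coefficients of the resulting series define `η`.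
On the other side, the infinitesimal moment-cumulant formula at `(X, …, X)` is the free
moment-cumulant formula in `ℂ⟦X⟧ ⧸ (X^(k+1))` for the generating series of the infinitesimal
cumulants, so these series are the free cumulants of the moment series modulo `X^(k+1)`, and
free cumulants of `η` are additive by construction.
-/


open scoped BigOperators
attribute [local instance] Classical.propDecidable

/-- A (set) partition of a type `X`: nonempty blocks, every point in a unique block. -/
def IsPartition {X : Type*} (P : Finset (Finset X)) : Prop :=
  (∀ B ∈ P, B.Nonempty) ∧ ∀ x : X, ∃! B, B ∈ P ∧ x ∈ B

/-- Non-crossing collection of blocks in a linear order. -/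
def IsNonCrossing {X : Type*} [LinearOrder X] (P : Finset (Finset X)) : Prop :=
  ∀ a b c d : X, a < b → b < c → c < d →
    (∃ B ∈ P, a ∈ B ∧ c ∈ B) → (∃ B ∈ P, b ∈ B ∧ d ∈ B) →
    ∃ B ∈ P, a ∈ B ∧ b ∈ B

/-- The finset `NC(n)` of non-crossing partitions of `[n]` (modelled on `Fin n`). -/
noncomputable def ncFinset (n : ℕ) : Finset (Finset (Finset (Fin n))) :=
  Finset.univ.filter fun P => IsPartition P ∧ IsNonCrossing P

/-- The subtuple `(a_1,…,a_n)|V` of the entries indexed by `V`, in increasing order. -/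
noncomputable def restrictTuple {A : Type*} {n : ℕ} (a : Fin n → A) (V : Finset (Fin n)) :
    Fin V.card → A :=
  fun i => a (V.orderIsoOfFin rfl i).1

/-- The defining (infinitesimal) moment-cumulant formula: the family
`(κ^{(i)}_n)_{n ≥ 1, 0 ≤ i ≤ k}` of multilinear functionals (indexed by `ℕ`, only the
indices `i ≤ k` being relevant) is the family of infinitesimal non-crossing cumulant
functionals of `(A, (φ^{(i)})_{0 ≤ i ≤ k})`:
`Σ_{p ∈ NC(n)} Σ_{f : p → ℕ, Σ f = i} (i!/∏_V f(V)!) ∏_{V∈p} κ^{(f(V))}_{|V|}((a)|V)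
  = φ^{(i)}(a_1⋯a_n)`. -/
def InfCumFormula (k : ℕ) {A : Type*} [Ring A] [Algebra ℂ A]
    (φ : ℕ → (A →ₗ[ℂ] ℂ))
    (κ : ℕ → (n : ℕ) → MultilinearMap ℂ (fun _ : Fin n => A) ℂ) : Prop :=
  ∀ i ≤ k, ∀ (n : ℕ), 1 ≤ n → ∀ a : Fin n → A,
    ∑ p ∈ ncFinset n,
      ∑ f ∈ (Fintype.piFinset fun _ : {V // V ∈ p} => Finset.range (i + 1)) |>.filter
          (fun f => ∑ V, f V = i),
        ((i.factorial : ℂ) / ∏ V, ((f V).factorial : ℂ)) *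
          ∏ V : {V // V ∈ p}, κ (f V) V.1.card (restrictTuple a V.1)
    = φ i (List.ofFn a).prod

/-- `h(t) = o(t^k)` as `t → 0` along `K`: `h(t)/t^k → 0` as `t → 0`, `t ∈ K`. -/
def IsLittleOtk (k : ℕ) (K : Set ℝ) (h : ℝ → ℂ) : Prop :=
  Filter.Tendsto (fun t : ℝ => h t / (t : ℂ) ^ k) (nhdsWithin 0 (K \ {0})) (nhds 0)

/-- `c` is the free cumulant sequence of the functional `ρ` on `ℂ[X]` with `ρ(1) = 1`:
`Σ_{p ∈ NC(n)} ∏_{V ∈ p} c_{|V|} = ρ(X^n)` for all `n ≥ 1`. -/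
def IsCumulantSeq (ρ : Polynomial ℂ →ₗ[ℂ] ℂ) (c : ℕ → ℂ) : Prop :=
  ∀ n : ℕ, 1 ≤ n → ∑ p ∈ ncFinset n, ∏ V ∈ p, c V.card = ρ (Polynomial.X ^ n)

/-- `ξ` is the free additive convolution `μ ⊞ ν`: `ξ(1) = 1` and the free cumulants
of `ξ` are the sums of those of `μ` and `ν`. -/
def IsFreeConv (μ ν ξ : Polynomial ℂ →ₗ[ℂ] ℂ) : Prop :=
  ξ 1 = 1 ∧ ∀ cμ cν cξ : ℕ → ℂ, IsCumulantSeq μ cμ → IsCumulantSeq ν cν →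
    IsCumulantSeq ξ cξ → ∀ n : ℕ, 1 ≤ n → cξ n = cμ n + cν n

open Finset Filter Asymptotics Topology
open scoped Polynomial PowerSeries

section NonCrossing

variable {n : ℕ} {p : Finset (Finset (Fin n))} {V : Finset (Fin n)}

lemma mem_ncFinset : p ∈ ncFinset n ↔ IsPartition p ∧ IsNonCrossing p := by
  simp [ncFinset]

lemma IsPartition.eq_singleton_of_univ_mem {X : Type*} [Fintype X] {P : Finset (Finset X)}
    (hP : IsPartition P) (hu : univ ∈ P) : P = {univ} := by
  refine eq_singleton_iff_unique_mem.2 ⟨hu, fun B hB => ?_⟩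
  obtain ⟨x, hx⟩ := hP.1 B hB
  exact (hP.2 x).unique ⟨hB, hx⟩ ⟨hu, mem_univ x⟩

lemma singleton_univ_mem_ncFinset (hn : 0 < n) : {univ} ∈ ncFinset n := by
  have : NeZero n := ⟨hn.ne'⟩
  refine mem_ncFinset.2 ⟨⟨?_, fun x => ?_⟩, ?_⟩
  · simp
  · exact ⟨univ, by simp, fun B hB => mem_singleton.1 hB.1⟩
  · intro a b _ _ _ _ _ _ _
    exact ⟨univ, mem_singleton_self _, mem_univ a, mem_univ b⟩

lemma ncFinset_zero : ncFinset 0 = {∅} := by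
  ext p
  rw [mem_ncFinset, mem_singleton]
  constructor
  · rintro ⟨⟨hne, -⟩, -⟩
    exact eq_empty_of_forall_notMem fun B hB => (hne B hB).ne_empty (Subsingleton.elim _ _)
  · rintro rfl
    exact ⟨⟨by simp, fun x => x.elim0⟩, fun a => a.elim0⟩

lemma card_pos_of_mem_ncFinset (hp : p ∈ ncFinset n) (hV : V ∈ p) : 0 < V.card :=
  card_pos.2 ((mem_ncFinset.1 hp).1.1 V hV)

lemma card_lt_of_mem_erase_ncFinset (hp : p ∈ (ncFinset n).erase {univ}) (hV : V ∈ p) :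
    V.card < n := by
  obtain ⟨hne, hp⟩ := mem_erase.1 hp
  refine ((card_le_univ V).trans_eq (Fintype.card_fin n)).lt_of_ne fun h => hne ?_
  have hVu : V = univ := eq_univ_of_card V (h.trans (Fintype.card_fin n).symm)
  exact (mem_ncFinset.1 hp).1.eq_singleton_of_univ_mem (hVu ▸ hV)

end NonCrossing

section FreeCumulants

variable {S T : Type*} [CommRing S] [CommRing T]

noncomputable def freeMoment (c : ℕ → S) (n : ℕ) : S :=
  ∑ p ∈ ncFinset n, ∏ V ∈ p, c V.card

lemma freeMoment_zero (c : ℕ → S) : freeMoment c 0 = 1 := by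
  simp [freeMoment, ncFinset_zero]

lemma freeMoment_eq_add_sum_erase (c : ℕ → S) {n : ℕ} (hn : 0 < n) :
    freeMoment c n = c n + ∑ p ∈ (ncFinset n).erase {univ}, ∏ V ∈ p, c V.card := by
  rw [freeMoment, ← add_sum_erase _ _ (singleton_univ_mem_ncFinset hn), prod_singleton,
    card_univ, Fintype.card_fin]

lemma freeMoment_congr {c c' : ℕ → S} (h : ∀ m, 0 < m → c m = c' m) (n : ℕ) :
    freeMoment c n = freeMoment c' n :=
  sum_congr rfl fun _ hp => prod_congr rfl fun _ hV => h _ (card_pos_of_mem_ncFinset hp hV)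

lemma map_freeMoment (f : S →+* T) (c : ℕ → S) (n : ℕ) :
    f (freeMoment c n) = freeMoment (f ∘ c) n := by
  simp [freeMoment, map_sum, map_prod]

noncomputable def freeCumulant (m : ℕ → S) : ℕ → S
  | n => m n - ∑ p ∈ ((ncFinset n).erase {univ}).attach,
      ∏ V ∈ p.1.attach, freeCumulant m V.1.card
  decreasing_by exact card_lt_of_mem_erase_ncFinset p.2 V.2

lemma freeCumulant_eq (m : ℕ → S) (n : ℕ) :
    freeCumulant m n =
      m n - ∑ p ∈ (ncFinset n).erase {univ}, ∏ V ∈ p, freeCumulant m V.card := by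
  rw [freeCumulant, ← sum_attach ((ncFinset n).erase {univ})]
  exact congrArg _ (sum_congr rfl fun p _ => prod_attach p.1 fun V => freeCumulant m V.card)

lemma freeMoment_freeCumulant (m : ℕ → S) {n : ℕ} (hn : 0 < n) :
    freeMoment (freeCumulant m) n = m n := by
  rw [freeMoment_eq_add_sum_erase _ hn, freeCumulant_eq, sub_add_cancel]

lemma eq_freeCumulant_of_freeMoment_eq {c m : ℕ → S} (h : ∀ n, 0 < n → freeMoment c n = m n)
    {n : ℕ} (hn : 0 < n) : c n = freeCumulant m n := by
  induction n using Nat.strong_induction_on with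
  | _ n ih =>
    have hsum : ∑ p ∈ (ncFinset n).erase {univ}, ∏ V ∈ p, c V.card =
        ∑ p ∈ (ncFinset n).erase {univ}, ∏ V ∈ p, freeCumulant m V.card :=
      sum_congr rfl fun p hp => prod_congr rfl fun V hV =>
        ih _ (card_lt_of_mem_erase_ncFinset hp hV)
          (card_pos_of_mem_ncFinset (mem_of_mem_erase hp) hV)
    rw [freeCumulant_eq, ← h n hn, freeMoment_eq_add_sum_erase c hn, hsum, add_sub_cancel_right]

lemma map_freeCumulant (f : S →+* T) (m : ℕ → S) (n : ℕ) :
    f (freeCumulant m n) = freeCumulant (f ∘ m) n := by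
  induction n using Nat.strong_induction_on with
  | _ n ih =>
    rw [freeCumulant_eq, freeCumulant_eq, map_sub, map_sum]
    congr 1
    refine sum_congr rfl fun p hp => ?_
    rw [map_prod]
    exact prod_congr rfl fun V hV => ih _ (card_lt_of_mem_erase_ncFinset hp hV)

lemma freeCumulant_mem {σ : Type*} [SetLike σ S] [SubringClass σ S] {R : σ} {m : ℕ → S}
    (hm : ∀ n, m n ∈ R) (n : ℕ) : freeCumulant m n ∈ R := by
  induction n using Nat.strong_induction_on with
  | _ n ih =>
    rw [freeCumulant_eq]
    exact sub_mem (hm n) (sum_mem fun p hp => prod_mem fun V hV =>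
      ih _ (card_lt_of_mem_erase_ncFinset hp hV))

noncomputable def freeConvMoment (m m' : ℕ → S) : ℕ → S :=
  freeMoment (freeCumulant m + freeCumulant m')

lemma freeCumulant_freeConvMoment (m m' : ℕ → S) {n : ℕ} (hn : 0 < n) :
    freeCumulant (freeConvMoment m m') n = freeCumulant m n + freeCumulant m' n :=
  (eq_freeCumulant_of_freeMoment_eq (fun _ _ => rfl) hn).symm

lemma map_freeConvMoment (f : S →+* T) (m m' : ℕ → S) (n : ℕ) :
    f (freeConvMoment m m' n) = freeConvMoment (f ∘ m) (f ∘ m') n := by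
  rw [freeConvMoment, map_freeMoment]
  congr 1
  ext j
  simp [map_freeCumulant]

lemma freeConvMoment_mem {σ : Type*} [SetLike σ S] [SubringClass σ S] {R : σ} {m m' : ℕ → S}
    (hm : ∀ n, m n ∈ R) (hm' : ∀ n, m' n ∈ R) (n : ℕ) : freeConvMoment m m' n ∈ R :=
  show freeMoment _ n ∈ R from sum_mem fun _ _ => prod_mem fun _ _ =>
    add_mem (freeCumulant_mem hm _) (freeCumulant_mem hm' _)

lemma isCumulantSeq_freeCumulant (ρ : ℂ[X] →ₗ[ℂ] ℂ) :
    IsCumulantSeq ρ (freeCumulant fun n => ρ (Polynomial.X ^ n)) :=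
  fun _ hn => freeMoment_freeCumulant _ hn

lemma IsFreeConv.apply_X_pow {μ ν ξ : ℂ[X] →ₗ[ℂ] ℂ} (h : IsFreeConv μ ν ξ) (n : ℕ) :
    ξ (Polynomial.X ^ n) =
      freeConvMoment (fun m => μ (Polynomial.X ^ m)) (fun m => ν (Polynomial.X ^ m)) n := by
  rcases n.eq_zero_or_pos with rfl | hn
  · rw [pow_zero, h.1, freeConvMoment, freeMoment_zero]
  · rw [← freeMoment_freeCumulant (fun m => ξ (Polynomial.X ^ m)) hn]
    exact freeMoment_congr (h.2 _ _ _ (isCumulantSeq_freeCumulant μ)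
      (isCumulantSeq_freeCumulant ν) (isCumulantSeq_freeCumulant ξ)) n

end FreeCumulants

section InfinitesimalCumulants

noncomputable def egf {𝕜 : Type*} [Field 𝕜] (a : ℕ → 𝕜) : 𝕜⟦X⟧ :=
  PowerSeries.mk fun i => a i / i.factorial

@[simp]
lemma coeff_egf {𝕜 : Type*} [Field 𝕜] (a : ℕ → 𝕜) (i : ℕ) :
    PowerSeries.coeff i (egf a) = a i / i.factorial :=
  PowerSeries.coeff_mk _ _

lemma egf_factorial_mul_coeff {𝕜 : Type*} [Field 𝕜] [CharZero 𝕜] (F : 𝕜⟦X⟧) :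
    egf (fun i => (i.factorial : 𝕜) * PowerSeries.coeff i F) = F := by
  ext i
  rw [coeff_egf, mul_div_cancel_left₀ _ (Nat.cast_ne_zero.2 i.factorial_ne_zero)]

lemma PowerSeries.coeff_prod_eq_sum_piFinset {R ι : Type*} [CommSemiring R] [Fintype ι]
    (F : ι → R⟦X⟧) (i : ℕ) :
    coeff i (∏ j, F j) =
      ∑ f ∈ (Fintype.piFinset fun _ : ι => range (i + 1)).filter (fun f => ∑ j, f j = i),
        ∏ j, coeff (f j) (F j) := by
  classical
  rw [coeff_prod F i univ]
  refine sum_nbij' (⇑) Finsupp.equivFunOnFinite.symm (fun l hl => ?_) (fun f hf => ?_)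
    (fun l _ => Finsupp.equivFunOnFinite_symm_coe l) (fun _ _ => rfl) (fun _ _ => rfl)
  · rw [mem_finsuppAntidiag] at hl
    refine mem_filter.2 ⟨Fintype.mem_piFinset.2 fun j => ?_, hl.1⟩
    rw [mem_range, Nat.lt_succ_iff, ← hl.1]
    exact single_le_sum (fun _ _ => Nat.zero_le _) (mem_univ j)
  · exact mem_finsuppAntidiag.2 ⟨by simpa using (mem_filter.1 hf).2, subset_univ _⟩

noncomputable def momentEgf (φ : ℕ → (ℂ[X] →ₗ[ℂ] ℂ)) (n : ℕ) : ℂ⟦X⟧ :=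
  egf fun i => φ i (Polynomial.X ^ n)

noncomputable def cumulantEgf (κ : ℕ → (n : ℕ) → MultilinearMap ℂ (fun _ : Fin n => ℂ[X]) ℂ)
    (n : ℕ) : ℂ⟦X⟧ :=
  egf fun i => κ i n fun _ => Polynomial.X

variable {k : ℕ} {φ : ℕ → (ℂ[X] →ₗ[ℂ] ℂ)}
  {κ : ℕ → (n : ℕ) → MultilinearMap ℂ (fun _ : Fin n => ℂ[X]) ℂ}

lemma coeff_freeMoment_cumulantEgf (hκ : InfCumFormula k φ κ) {i n : ℕ} (hi : i ≤ k)
    (hn : 0 < n) :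
    PowerSeries.coeff i (freeMoment (cumulantEgf κ) n) = PowerSeries.coeff i (momentEgf φ n) := by
  have hformula := hκ i hi n hn fun _ => Polynomial.X
  rw [List.ofFn_const, List.prod_replicate] at hformula
  have hfac : (i.factorial : ℂ) ≠ 0 := Nat.cast_ne_zero.2 i.factorial_ne_zero
  rw [momentEgf, coeff_egf, ← hformula, freeMoment, map_sum, sum_div]
  refine sum_congr rfl fun p _ => ?_
  rw [← prod_coe_sort, PowerSeries.coeff_prod_eq_sum_piFinset, sum_div]
  -- the two filters differ only in their `Decidable` instances
  refine sum_congr (by congr!) fun f _ => ?_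
  have hfacs : ∏ V : {V // V ∈ p}, ((f V).factorial : ℂ) ≠ 0 :=
    prod_ne_zero_iff.2 fun V _ => Nat.cast_ne_zero.2 (f V).factorial_ne_zero
  simp only [cumulantEgf, coeff_egf, prod_div_distrib]
  field_simp
  rfl

lemma mk_eq_mk_iff_forall_coeff_eq {R : Type*} [CommRing R] {k : ℕ} {F G : R⟦X⟧} :
    Ideal.Quotient.mk (Ideal.span {PowerSeries.X ^ (k + 1)}) F = Ideal.Quotient.mk _ G ↔
      ∀ i ≤ k, PowerSeries.coeff i F = PowerSeries.coeff i G := by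
  simp [Ideal.Quotient.eq, Ideal.mem_span_singleton, PowerSeries.X_pow_dvd_iff, sub_eq_zero]

lemma coeff_cumulantEgf (hκ : InfCumFormula k φ κ) {i n : ℕ} (hi : i ≤ k) (hn : 0 < n) :
    PowerSeries.coeff i (cumulantEgf κ n) =
      PowerSeries.coeff i (freeCumulant (momentEgf φ) n) := by
  -- modulo `X^(k+1)` the infinitesimal formula is the free moment-cumulant formula over `ℂ⟦X⟧`
  set π := Ideal.Quotient.mk (Ideal.span {(PowerSeries.X : ℂ⟦X⟧) ^ (k + 1)})
  have hmoment : ∀ m, 0 < m → freeMoment (π ∘ cumulantEgf κ) m = (π ∘ momentEgf φ) m :=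
    fun m hm => by
      rw [← map_freeMoment]
      exact mk_eq_mk_iff_forall_coeff_eq.2 fun j hj => coeff_freeMoment_cumulantEgf hκ hj hm
  have hcum := eq_freeCumulant_of_freeMoment_eq hmoment hn
  rw [Function.comp_apply, ← map_freeCumulant] at hcum
  exact mk_eq_mk_iff_forall_coeff_eq.1 hcum i hi

end InfinitesimalCumulants

section Expansions

variable {k : ℕ} {s : Set ℝ}

lemma isBigO_one_eval (Q : ℂ[X]) :
    (fun t : ℝ => Q.eval (t : ℂ)) =O[𝓝[s] 0] fun _ => (1 : ℂ) :=
  (((Q.continuous.comp Complex.continuous_ofReal).tendsto 0).isBigO_one ℂ).mono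
    nhdsWithin_le_nhds

lemma isLittleO_eval_of_X_pow_dvd {Q : ℂ[X]} (hQ : Polynomial.X ^ (k + 1) ∣ Q) :
    (fun t : ℝ => Q.eval (t : ℂ)) =o[𝓝[s] 0] fun t => (t : ℂ) ^ k := by
  obtain ⟨R, rfl⟩ := hQ
  have hR : Tendsto (fun t : ℝ => (t : ℂ) * R.eval (t : ℂ)) (𝓝[s] 0) (𝓝 0) := by
    have hcont : Continuous fun t : ℝ => (t : ℂ) * R.eval (t : ℂ) :=
      Complex.continuous_ofReal.mul (R.continuous.comp Complex.continuous_ofReal)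
    simpa using (hcont.tendsto 0).mono_left nhdsWithin_le_nhds
  refine ((isBigO_refl (fun t : ℝ => (t : ℂ) ^ k) _).mul_isLittleO
    ((isLittleO_one_iff ℂ).2 hR)).congr (fun t => ?_) (fun t => mul_one _)
  simp only [Polynomial.eval_mul, Polynomial.eval_pow, Polynomial.eval_X]
  ring

lemma PowerSeries.X_pow_dvd_trunc_mul_trunc_sub_trunc_mul {R : Type*} [CommRing R] (n : ℕ)
    (F G : R⟦X⟧) : Polynomial.X ^ n ∣ trunc n F * trunc n G - trunc n (F * G) := by
  refine Polynomial.X_pow_dvd_iff.2 fun d hd => ?_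
  rw [Polynomial.coeff_sub, ← trunc_trunc_mul_trunc, ← Polynomial.coe_mul, coeff_trunc,
    if_pos hd, Polynomial.coeff_coe, sub_self]

variable (k s) in
def expansionSubalgebra : Subalgebra ℂ ((ℝ → ℂ) × ℂ⟦X⟧) where
  carrier := {p | (fun t : ℝ => p.1 t - (PowerSeries.trunc (k + 1) p.2).eval (t : ℂ))
    =o[𝓝[s] 0] fun t => (t : ℂ) ^ k}
  add_mem' {p q} hp hq := (hp.add hq).congr_left fun t => by
    simp only [Prod.fst_add, Pi.add_apply, Prod.snd_add, map_add, Polynomial.eval_add]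
    ring
  mul_mem' {p q} hp hq := by
    obtain ⟨g, F⟩ := p
    obtain ⟨h, G⟩ := q
    have hA := isBigO_one_eval (s := s) (PowerSeries.trunc (k + 1) F)
    have hh : h =O[𝓝[s] 0] fun _ => (1 : ℂ) := by
      have htk : (fun t : ℝ => (t : ℂ) ^ k) =O[𝓝[s] 0] fun _ => (1 : ℂ) :=
        (isBigO_one_eval (Polynomial.X ^ k)).congr_left fun t => by simp
      exact ((hq.isBigO.trans htk).add (isBigO_one_eval _)).congr_left fun t => sub_add_cancel _ _
    have hrem := isLittleO_eval_of_X_pow_dvd (s := s)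
      (PowerSeries.X_pow_dvd_trunc_mul_trunc_sub_trunc_mul (k + 1) F G)
    have hleft := (hp.mul_isBigO hh).congr_right fun t => mul_one _
    have hright := (hA.mul_isLittleO hq).congr_right fun t => one_mul _
    refine ((hleft.add hright).add hrem).congr_left fun t => ?_
    simp only [Prod.fst_mul, Prod.snd_mul, Pi.mul_apply, Polynomial.eval_sub, Polynomial.eval_mul]
    ring
  algebraMap_mem' c := by
    simp [Prod.algebraMap_apply, PowerSeries.algebraMap_eq]

lemma mem_expansionSubalgebra {p : (ℝ → ℂ) × ℂ⟦X⟧} :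
    p ∈ expansionSubalgebra k s ↔
      (fun t : ℝ => p.1 t - (PowerSeries.trunc (k + 1) p.2).eval (t : ℂ))
        =o[𝓝[s] 0] fun t => (t : ℂ) ^ k :=
  Iff.rfl

lemma mem_expansionSubalgebra_of_eventuallyEq {g g' : ℝ → ℂ} {F : ℂ⟦X⟧}
    (h : (g, F) ∈ expansionSubalgebra k s) (hg : g =ᶠ[𝓝[s] 0] g') :
    (g', F) ∈ expansionSubalgebra k s :=
  IsLittleO.congr' h (hg.sub EventuallyEq.rfl) EventuallyEq.rfl

lemma isLittleOtk_iff_mem_expansionSubalgebra {K : Set ℝ} {g : ℝ → ℂ} {a : ℕ → ℂ} :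
    IsLittleOtk k K (fun t => g t - ∑ i ∈ range (k + 1), (t : ℂ) ^ i / i.factorial * a i) ↔
      (g, egf a) ∈ expansionSubalgebra k (K \ {0}) := by
  have hjet : ∀ t : ℝ, (PowerSeries.trunc (k + 1) (egf a)).eval (t : ℂ) =
      ∑ i ∈ range (k + 1), (t : ℂ) ^ i / i.factorial * a i := fun t => by
    rw [← Polynomial.eval₂_id, PowerSeries.eval₂_trunc_eq_sum_range]
    exact sum_congr rfl fun i _ => by simp only [coeff_egf, RingHom.id_apply]; ring
  have hne : ∀ᶠ t : ℝ in 𝓝[K \ {0}] 0, (t : ℂ) ^ k ≠ 0 := by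
    filter_upwards [self_mem_nhdsWithin] with t ht
    exact pow_ne_zero k (Complex.ofReal_ne_zero.2 ht.2)
  rw [IsLittleOtk, mem_expansionSubalgebra]
  simp only [hjet]
  exact (isLittleO_iff_tendsto' (hne.mono fun t ht h => absurd h ht)).symm

lemma Polynomial.basisMonomials_constr_X_pow {R M : Type*} [CommSemiring R] [AddCommMonoid M]
    [Module R M] (v : ℕ → M) (n : ℕ) : (basisMonomials R).constr R v (X ^ n) = v n := by
  rw [X_pow_eq_monomial, ← congrFun (coe_basisMonomials R) n, Module.Basis.constr_basis]

lemma mem_expansionSubalgebra_of_X_pow {ξ : ℝ → (ℂ[X] →ₗ[ℂ] ℂ)} {M : ℕ → ℂ⟦X⟧}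
    (h : ∀ n, (fun t => ξ t (Polynomial.X ^ n), M n) ∈ expansionSubalgebra k s) (P : ℂ[X]) :
    (fun t => ξ t P, (Polynomial.basisMonomials ℂ).constr ℂ M P) ∈ expansionSubalgebra k s := by
  let L : ℂ[X] →ₗ[ℂ] (ℝ → ℂ) × ℂ⟦X⟧ :=
    (LinearMap.pi ξ).prod ((Polynomial.basisMonomials ℂ).constr ℂ M)
  suffices ⊤ ≤ (Subalgebra.toSubmodule (expansionSubalgebra k s)).comap L from
    this (Submodule.mem_top (x := P))
  rw [← (Polynomial.basisMonomials ℂ).span_eq, Submodule.span_le]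
  rintro _ ⟨n, rfl⟩
  simp only [Polynomial.coe_basisMonomials, ← Polynomial.X_pow_eq_monomial]
  show (fun t => ξ t (Polynomial.X ^ n), (Polynomial.basisMonomials ℂ).constr ℂ M
    (Polynomial.X ^ n)) ∈ expansionSubalgebra k s
  rw [Polynomial.basisMonomials_constr_X_pow]
  exact h n

lemma freeConvMoment_mem_expansionSubalgebra {m m' : ℝ → ℕ → ℂ} {M M' : ℕ → ℂ⟦X⟧}
    (h : ∀ n, (fun t => m t n, M n) ∈ expansionSubalgebra k s)
    (h' : ∀ n, (fun t => m' t n, M' n) ∈ expansionSubalgebra k s) (n : ℕ) :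
    (fun t => freeConvMoment (m t) (m' t) n, freeConvMoment M M' n) ∈
      expansionSubalgebra k s := by
  let x : ℕ → (ℝ → ℂ) × ℂ⟦X⟧ := fun n => (fun t => m t n, M n)
  let x' : ℕ → (ℝ → ℂ) × ℂ⟦X⟧ := fun n => (fun t => m' t n, M' n)
  convert freeConvMoment_mem (R := expansionSubalgebra k s) (m := x) (m' := x') h h' n using 1
  refine Prod.ext (funext fun t => ?_) ?_
  · exact map_freeConvMoment
      ((Pi.evalRingHom (fun _ : ℝ => ℂ) t).comp (RingHom.fst (ℝ → ℂ) ℂ⟦X⟧)) x x' n |>.symm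
  · exact map_freeConvMoment (RingHom.snd (ℝ → ℂ) ℂ⟦X⟧) x x' n |>.symm

end Expansions

theorem stmt18_general (k : ℕ) (K : Set ℝ)
    (μ ν : ℝ → (Polynomial ℂ →ₗ[ℂ] ℂ))
    (μ' ν' : ℕ → (Polynomial ℂ →ₗ[ℂ] ℂ))
    (hμexp : ∀ P : Polynomial ℂ, IsLittleOtk k K fun t =>
      μ t P - ∑ i ∈ Finset.range (k + 1), (t : ℂ) ^ i / (i.factorial : ℂ) * μ' i P)
    (hνexp : ∀ P : Polynomial ℂ, IsLittleOtk k K fun t =>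
      ν t P - ∑ i ∈ Finset.range (k + 1), (t : ℂ) ^ i / (i.factorial : ℂ) * ν' i P)
    (conv : ℝ → (Polynomial ℂ →ₗ[ℂ] ℂ))
    (hconv : ∀ t ∈ K, IsFreeConv (μ t) (ν t) (conv t)) :
    ∃ η : ℕ → (Polynomial ℂ →ₗ[ℂ] ℂ),
      (∀ P : Polynomial ℂ, IsLittleOtk k K fun t =>
        conv t P - ∑ i ∈ Finset.range (k + 1), (t : ℂ) ^ i / (i.factorial : ℂ) * η i P) ∧
      ∀ (κμ κν κη : ℕ → (n : ℕ) → MultilinearMap ℂ (fun _ : Fin n => Polynomial ℂ) ℂ),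
        InfCumFormula k μ' κμ → InfCumFormula k ν' κν → InfCumFormula k η κη →
        ∀ (n : ℕ), 1 ≤ n → ∀ i ≤ k,
          κη i n (fun _ => Polynomial.X) =
            κμ i n (fun _ => Polynomial.X) + κν i n (fun _ => Polynomial.X) := by
  set M := freeConvMoment (momentEgf μ') (momentEgf ν')
  set W := (Polynomial.basisMonomials ℂ).constr ℂ M
  have hconvX (n : ℕ) :
      (fun t => conv t (Polynomial.X ^ n), M n) ∈ expansionSubalgebra k (K \ {0}) :=
    mem_expansionSubalgebra_of_eventuallyEq
      (freeConvMoment_mem_expansionSubalgebra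
        (fun _ => isLittleOtk_iff_mem_expansionSubalgebra.1 (hμexp _))
        (fun _ => isLittleOtk_iff_mem_expansionSubalgebra.1 (hνexp _)) n)
      (eventually_nhdsWithin_of_forall fun t ht => ((hconv t ht.1).apply_X_pow n).symm)
  have hW : ∀ P, egf (fun i => (i.factorial : ℂ) * PowerSeries.coeff i (W P)) = W P :=
    fun P => egf_factorial_mul_coeff _
  refine ⟨fun i => (i.factorial : ℂ) • (PowerSeries.coeff i ∘ₗ W), fun P => ?_, ?_⟩
  · refine isLittleOtk_iff_mem_expansionSubalgebra.2 ?_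
    simpa only [LinearMap.smul_apply, LinearMap.comp_apply, smul_eq_mul, hW]
      using mem_expansionSubalgebra_of_X_pow hconvX P
  · intro κμ κν κη hκμ hκν hκη n hn i hi
    have hmoment : momentEgf (fun i => (i.factorial : ℂ) • (PowerSeries.coeff i ∘ₗ W)) = M :=
      funext fun m => (hW _).trans (Polynomial.basisMonomials_constr_X_pow M m)
    have hcum := coeff_cumulantEgf hκη hi hn
    rw [hmoment, freeCumulant_freeConvMoment _ _ hn, map_add, ← coeff_cumulantEgf hκμ hi hn,
      ← coeff_cumulantEgf hκν hi hn] at hcum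
    simp only [cumulantEgf, coeff_egf] at hcum
    rwa [← add_div, div_left_inj' (Nat.cast_ne_zero.2 i.factorial_ne_zero)] at hcum

/-- **Statement 18.** If `(μ_t)` and `(ν_t)` admit expansions
`μ_t = Σ_{i≤k} (t^i/i!) μ^{(i)} + o(t^k)`, `ν_t = Σ_{i≤k} (t^i/i!) ν^{(i)} + o(t^k)`
along `K` (with `0` an accumulation point of `K`), then the free convolutions
`μ_t ⊞ ν_t` admit an expansion `Σ_{i≤k} (t^i/i!) η^{(i)} + o(t^k)`, and the
infinitesimal non-crossing cumulants of `(η^{(i)})` are the sums of those of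
`(μ^{(i)})` and `(ν^{(i)})`. -/
theorem stmt18 (k : ℕ) (K : Set ℝ) (hK : (nhdsWithin (0 : ℝ) (K \ {0})).NeBot)
    (μ ν : ℝ → (Polynomial ℂ →ₗ[ℂ] ℂ))
    (hμ1 : ∀ t ∈ K, μ t 1 = 1) (hν1 : ∀ t ∈ K, ν t 1 = 1)
    (μ' ν' : ℕ → (Polynomial ℂ →ₗ[ℂ] ℂ))
    (hμexp : ∀ P : Polynomial ℂ, IsLittleOtk k K fun t =>
      μ t P - ∑ i ∈ Finset.range (k + 1), (t : ℂ) ^ i / (i.factorial : ℂ) * μ' i P)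
    (hνexp : ∀ P : Polynomial ℂ, IsLittleOtk k K fun t =>
      ν t P - ∑ i ∈ Finset.range (k + 1), (t : ℂ) ^ i / (i.factorial : ℂ) * ν' i P)
    (conv : ℝ → (Polynomial ℂ →ₗ[ℂ] ℂ))
    (hconv : ∀ t ∈ K, IsFreeConv (μ t) (ν t) (conv t)) :
    ∃ η : ℕ → (Polynomial ℂ →ₗ[ℂ] ℂ),
      (∀ P : Polynomial ℂ, IsLittleOtk k K fun t =>
        conv t P - ∑ i ∈ Finset.range (k + 1), (t : ℂ) ^ i / (i.factorial : ℂ) * η i P) ∧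
      ∀ (κμ κν κη : ℕ → (n : ℕ) → MultilinearMap ℂ (fun _ : Fin n => Polynomial ℂ) ℂ),
        InfCumFormula k μ' κμ → InfCumFormula k ν' κν → InfCumFormula k η κη →
        ∀ (n : ℕ), 1 ≤ n → ∀ i ≤ k,
          κη i n (fun _ => Polynomial.X) =
            κμ i n (fun _ => Polynomial.X) + κν i n (fun _ => Polynomial.X) :=
  stmt18_general k K μ ν μ' ν' hμexp hνexp conv hconv
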